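/- arXiv:2401.09427 — 2 statements merged into one kernel-verified Lean document; each statement's English description precedes it below -/
import Mathlib

section
/- Let M be a smooth manifold, X a vector field on M that is C¹ (as a section of the tangent bundle) in a neighborhood of a point x₀ ∈ M, and suppose x₀ is an interior point of M. Then for any t₀ ∈ ℝ there exists a curve γ : ℝ → M with γ t₀ = x₀ that is an integral curve of X at t₀, i.e. there is a neighborhood of t₀ on which γ is differentiable in the manifold sense with derivative X (γ t) at each time t. -/
/-- Local existence of integral curves: if the vector field `X` is `C¹` in a neighborhood of
`x₀` and `x₀` is an interior point, then for any `t₀` there is an integral curve of `X` at `t₀`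
passing through `x₀` at time `t₀`. -/
theorem exists_integralCurveAt
    {E : Type*} [NormedAddCommGroup E] [NormedSpace ℝ E] [CompleteSpace E]
    {H : Type*} [TopologicalSpace H] {I : ModelWithCorners ℝ E H}
    {M : Type*} [TopologicalSpace M] [ChartedSpace H M] [IsManifold I (⊤ : ℕ∞) M]
    (X : (x : M) → TangentSpace I x) (x₀ : M)
    (hX : ContMDiffAt I I.tangent 1 (fun x ↦ (⟨x, X x⟩ : TangentBundle I M)) x₀)
    (hx₀ : I.IsInteriorPoint x₀) (t₀ : ℝ) :
    ∃ γ : ℝ → M, γ t₀ = x₀ ∧ IsMIntegralCurveAt γ X t₀ :=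
  exists_isMIntegralCurveAt_of_contMDiffAt t₀ hX hx₀
end

section
/- Let M be a smooth manifold and X a vector field on M that is C¹ (as a section of the tangent bundle) at a point x₀ ∈ M, with x₀ an interior point of M. If γ and γ' are both integral curves of X at t₀ ∈ ℝ and γ t₀ = γ' t₀ = x₀, then γ and γ' agree on some neighborhood of t₀. -/
open scoped Manifold Topology

/-- Local uniqueness of integral curves: if the vector field `X` is `C¹` at `x₀`, an interior
point, and `γ`, `γ'` are integral curves of `X` at `t₀` with `γ t₀ = γ' t₀ = x₀`, then `γ` and
`γ'` agree near `t₀`. -/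
theorem integralCurveAt_eventuallyEq
    {E : Type*} [NormedAddCommGroup E] [NormedSpace ℝ E]
    {H : Type*} [TopologicalSpace H] {I : ModelWithCorners ℝ E H}
    {M : Type*} [TopologicalSpace M] [ChartedSpace H M] [IsManifold I (⊤ : ℕ∞) M]
    (X : (x : M) → TangentSpace I x) (x₀ : M)
    (hX : ContMDiffAt I I.tangent 1 (fun x ↦ (⟨x, X x⟩ : TangentBundle I M)) x₀)
    (hx₀ : I.IsInteriorPoint x₀) (t₀ : ℝ) (γ γ' : ℝ → M)
    (hγ : IsMIntegralCurveAt γ X t₀) (hγ' : IsMIntegralCurveAt γ' X t₀)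
    (h : γ t₀ = x₀) (h' : γ' t₀ = x₀) :
    γ =ᶠ[𝓝 t₀] γ' :=
  isMIntegralCurveAt_eventuallyEq_of_contMDiffAt (h ▸ hx₀) (h ▸ hX) hγ hγ' (h.trans h'.symm)
end
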